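/- For every lambda0 in Pi_l, every nu in a_Z*, and every i in {1,...,n}, the element |lambda0 + l*nu> + |lambda0 + l*(s_i∘nu)> of V belongs to I + t^{1/2}V+. (Equation (1.16) of the paper, the mod t^{1/2} straightening identity) -/

import Mathlib

open Finsupp LaurentPolynomial

noncomputable section

/-- The ring `K = ℤ[t^{1/2}, t^{-1/2}]`: Laurent polynomials over `ℤ` in the
variable `T = t^{1/2}`. -/
abbrev K : Type := LaurentPolynomial ℤ

/-- The element `t^{1/2}` of `K`. -/
def tHalf : K := T 1

/-- The bar involution of `K`, determined by `t^{1/2} ↦ t^{-1/2}`. -/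
def conjK : K →+* K := (LaurentPolynomial.invert (R := ℤ)).toRingHom

/-- `V`: the free `K`-module with basis `{|λ⟩ : λ ∈ a_ℤ^*}` indexed by the weight
lattice `Λ`. -/
abbrev V (Λ : Type) : Type := Λ →₀ K

/-- The basis element `|λ⟩` of `V`. -/
def ket {Λ : Type} (lam : Λ) : V Λ := Finsupp.single lam 1

/-- The data of (the weight lattice of) a reduced finite crystallographic root
system: the weight lattice `Λ = a_ℤ^*`, the (finite) Weyl group `W = W₀` acting
on `Λ` through `σ`, the simple reflections `s i`, the simple roots `α i`, the
pairings `pair i = ⟨·, α_i^∨⟩` with the simple coroots, the finite set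
`posRoots` of pairings `⟨·, α^∨⟩` with the coroots `α^∨` of the positive roots
`α ∈ R⁺`, the half-sum `ρ` of the positive roots (assumed to lie in `Λ`), the
longest element `w0` (of length `posRoots.card`), and the sign character `det`. -/
structure RootData (Λ W : Type) [AddCommGroup Λ] [Group W] [Fintype W] where
  n : ℕ
  σ : W →* Multiplicative (AddAut Λ)
  s : Fin n → W
  α : Fin n → Λ
  pair : Fin n → Λ →+ ℤ
  posRoots : Finset (Λ →+ ℤ)
  ρ : Λ
  w0 : W
  det : W →* ℤˣ
  /-- `s i` acts on `Λ` as the reflection in the simple root `α i`. -/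
  reflect : ∀ (i : Fin n) (lam : Λ), Multiplicative.toAdd (σ (s i)) lam = lam - pair i lam • α i
  /-- crystallographic normalization `⟨α_i, α_i^∨⟩ = 2`. -/
  pair_alpha_self : ∀ i : Fin n, pair i (α i) = 2
  /-- the simple reflections are involutions. -/
  s_sq : ∀ i : Fin n, s i * s i = 1
  /-- `W₀` is generated by the simple reflections. -/
  gen_s : Subgroup.closure (Set.range s) = ⊤
  /-- `⟨ρ, α_i^∨⟩ = 1` for every simple coroot. -/
  pair_rho : ∀ i : Fin n, pair i ρ = 1
  /-- each simple coroot is the coroot of a positive root. -/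
  pair_mem : ∀ i : Fin n, pair i ∈ posRoots
  /-- the Weyl group permutes the (co)roots up to sign. -/
  roots_perm : ∀ (w : W), ∀ f ∈ posRoots,
    (∃ g ∈ posRoots, ∀ lam, f (Multiplicative.toAdd (σ w) lam) = g lam) ∨
    (∃ g ∈ posRoots, ∀ lam, f (Multiplicative.toAdd (σ w) lam) = - g lam)
  /-- `w0` sends every positive root to a negative root (so `w0` is the longest
  element, of length `posRoots.card`). -/
  w0_neg : ∀ f ∈ posRoots, ∃ g ∈ posRoots, ∀ lam, f (Multiplicative.toAdd (σ w0) lam) = - g lam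
  /-- `det` is the sign character. -/
  det_s : ∀ i : Fin n, det (s i) = -1

namespace RootData

variable {Λ W : Type} [AddCommGroup Λ] [Group W] [Fintype W]

/-- The dot action `w ∘ λ = w(λ + ρ) - ρ`. -/
def dot (D : RootData Λ W) (w : W) (lam : Λ) : Λ := Multiplicative.toAdd (D.σ w) (lam + D.ρ) - D.ρ

/-- `λ^{(1)} = λ - j • α_i`, where `⟨λ + ρ, α_i^∨⟩ = k l + j` with `j ∈ {0, …, l-1}`
(relative to the index `i`). -/
def lamOne (D : RootData Λ W) (l : ℕ) (i : Fin D.n) (lam : Λ) : Λ :=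
  lam - (D.pair i (lam + D.ρ) % (l : ℤ)) • D.α i

/-- A weight `λ` is dominant when `⟨λ + ρ, α_i^∨⟩ > 0` for all `i`. -/
def dominant (D : RootData Λ W) (lam : Λ) : Prop :=
  ∀ i : Fin D.n, 0 < D.pair i (lam + D.ρ)

/-- `λ₀ ∈ Π_l`: an `l`-restricted dominant weight. -/
def restricted (D : RootData Λ W) (l : ℕ) (lam : Λ) : Prop :=
  D.dominant lam ∧ ∀ i : Fin D.n, D.pair i lam ≤ (l : ℤ) - 1

/-- The `K`-submodule `I` of `V` spanned by the straightening elements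
(a), (b), (c). -/
def Idl (D : RootData Λ W) (l : ℕ) : Submodule K (V Λ) :=
  Submodule.span K
    ({x | ∃ (i : Fin D.n) (lam : Λ),
        (∃ k : ℤ, 0 ≤ k ∧ D.pair i (lam + D.ρ) = k * l) ∧
        x = ket (D.dot (D.s i) lam) + ket lam} ∪
     {x | ∃ (i : Fin D.n) (lam : Λ),
        0 < D.pair i (lam + D.ρ) ∧ D.pair i (lam + D.ρ) < (l : ℤ) ∧
        x = ket (D.dot (D.s i) lam) + tHalf • ket lam} ∪
     {x | ∃ (i : Fin D.n) (lam : Λ),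
        (l : ℤ) < D.pair i (lam + D.ρ) ∧ ¬ ((l : ℤ) ∣ D.pair i (lam + D.ρ)) ∧
        x = ket (D.dot (D.s i) lam) + tHalf • ket (D.dot (D.s i) (D.lamOne l i lam)) +
            ket (D.lamOne l i lam) + tHalf • ket lam})

/-- The operator `X^μ · : V → V` of the level `-(l+h)` action:
`X^μ · |γ⟩ = |γ - l w0(μ)⟩`. -/
def opX (D : RootData Λ W) (l : ℕ) (mu : Λ) : V Λ →ₗ[K] V Λ :=
  Finsupp.lmapDomain K K (fun gam => gam - l • Multiplicative.toAdd (D.σ D.w0) mu)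

/-- The level `-(l+h)` action of an element `g` of the group algebra `K[X]`
(with `K`-coefficients) on `V`. -/
def actKX (D : RootData Λ W) (l : ℕ) (g : Λ →₀ K) (v : V Λ) : V Λ :=
  g.sum fun mu c => c • (D.opX l mu v)

/-- The level `-(l+h)` action of an element `g` of `ℤ[X]` on `V`. -/
def actZX (D : RootData Λ W) (l : ℕ) (g : Λ →₀ ℤ) (v : V Λ) : V Λ :=
  g.sum fun mu c => c • (D.opX l mu v)

/-- `N_λ = #{α ∈ R⁺ : ⟨λ + ρ, α^∨⟩ ∈ lℤ}`. -/
def Ncount (D : RootData Λ W) (l : ℕ) (lam : Λ) : ℕ :=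
  (D.posRoots.filter (fun f => (l : ℤ) ∣ f (lam + D.ρ))).card

/-- The coefficient `(-1)^{l(w0)} (t^{-1/2})^{l(w0) - N_λ}` appearing in the bar
involution, where `l(w0) = Card R⁺`. -/
def barCoef (D : RootData Λ W) (l : ℕ) (lam : Λ) : K :=
  ((-1 : K) ^ D.posRoots.card) * T ((D.Ncount l lam : ℤ) - (D.posRoots.card : ℤ))

/-- The bar involution of `V`:
`bar(c|λ⟩) = c̄ (-1)^{l(w0)} (t^{-1/2})^{l(w0)-N_λ} |w0 ∘ λ⟩`. -/
def barV (D : RootData Λ W) (l : ℕ) (v : V Λ) : V Λ :=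
  v.sum fun lam c => (conjK c * D.barCoef l lam) • ket (D.dot D.w0 lam)

/-- `V⁺`: the `ℤ[t^{1/2}]`-span of the `|μ⟩` inside `V`, i.e. the elements all
of whose coefficients are polynomials in `t^{1/2}`. -/
def inVplus {Λ : Type} (b : V Λ) : Prop :=
  ∀ (mu : Λ) (m : ℤ), m < 0 → (b mu).coeff m = 0

/-- Membership in `I + t^{1/2} V⁺`. -/
def inIplus (D : RootData Λ W) (l : ℕ) (x : V Λ) : Prop :=
  ∃ a ∈ D.Idl l, ∃ b : V Λ, inVplus b ∧ x = a + tHalf • b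

/-- The Weyl numerator `∑_{w ∈ W₀} det(w) X^{w ν}` in `K[X]`. -/
def weylNumer (D : RootData Λ W) (nu : Λ) : AddMonoidAlgebra K Λ :=
  ∑ w : W, ((D.det w : ℤˣ) : ℤ) • AddMonoidAlgebra.single (Multiplicative.toAdd (D.σ w) nu) (1 : K)

/-- `g` is the Weyl character `s_ν ∈ ℤ[X]^{W₀} ⊆ K[X]`: it has integer
coefficients, is `W₀`-invariant, and satisfies the Weyl character formula
`(∑_w det(w) X^{wρ}) · s_ν = ∑_w det(w) X^{w(ν+ρ)}`. -/
def IsWeylChar (D : RootData Λ W) (nu : Λ) (g : AddMonoidAlgebra K Λ) : Prop :=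
  (∀ mu : Λ, ∃ z : ℤ, g.coeff mu = (z : K)) ∧
  (∀ (w : W) (mu : Λ), g.coeff (Multiplicative.toAdd (D.σ w) mu) = g.coeff mu) ∧
  D.weylNumer D.ρ * g = D.weylNumer (nu + D.ρ)

end RootData

end

/-! Put `λ = λ₀ + lν` and `c = ⟨ν + ρ, α_i^∨⟩`. Then `⟨λ + ρ, α_i^∨⟩ = a + l(c - 1)` with
`a = ⟨λ₀ + ρ, α_i^∨⟩ ∈ [1, l]`, and `λ₀ + l(s_i∘ν) = λ - lc α_i`. As `s_i∘` swaps `ν` and `s_i∘ν`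
and negates `c`, we may assume `c ≥ 0`. If `a = l`, the element is the relation (a) for `λ`. Otherwise
put `λ' = λ + (l - a) α_i`. For `c = 0` both kets are `|λ⟩`, and `λ = s_i∘λ'` with
`0 < ⟨λ' + ρ, α_i^∨⟩ < l`, so the relation (b) for `λ'` is `|λ⟩ + t^{1/2}|λ'⟩`. For `c ≥ 1` the
relation (c) for `λ'` has `λ'^{(1)} = λ` and `s_i∘λ' = λ - lc α_i`, so modulo `t^{1/2}` it is the
element we want. -/

namespace RootData

lemma inVplus_zero {Λ : Type} : inVplus (0 : V Λ) := fun _ _ _ => rfl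

lemma inVplus_ket {Λ : Type} (lam : Λ) : inVplus (ket lam) := by
  classical
  intro mu m hm
  rw [ket, Finsupp.single_apply]
  split_ifs
  · show (AddMonoidAlgebra.single 0 1 : K).coeff m = 0
    rw [AddMonoidAlgebra.coeff_single, Finsupp.single_apply, if_neg (by omega)]
  · rfl

lemma inVplus_add {Λ : Type} {b₁ b₂ : V Λ} (h₁ : inVplus b₁) (h₂ : inVplus b₂) :
    inVplus (b₁ + b₂) := by
  intro mu m hm
  rw [Finsupp.add_apply, AddMonoidAlgebra.coeff_add, Finsupp.add_apply, h₁ mu m hm,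
    h₂ mu m hm, add_zero]

lemma inVplus_neg {Λ : Type} {b : V Λ} (h : inVplus b) : inVplus (-b) := by
  intro mu m hm
  rw [Finsupp.neg_apply, AddMonoidAlgebra.coeff_neg, Finsupp.neg_apply, h mu m hm, neg_zero]

variable {Λ W : Type} [AddCommGroup Λ] [Group W] [Fintype W]
  (D : RootData Λ W) (l : ℕ) (i : Fin D.n)

lemma dot_s_eq (lam : Λ) : D.dot (D.s i) lam = lam - D.pair i (lam + D.ρ) • D.α i := by
  rw [dot, D.reflect]
  abel

lemma pair_add_zsmul_alpha (lam : Λ) (z : ℤ) :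
    D.pair i (lam + z • D.α i) = D.pair i lam + 2 * z := by
  rw [map_add, map_zsmul, D.pair_alpha_self, smul_eq_mul, mul_comm]

lemma pair_dot_s_add_rho (lam : Λ) :
    D.pair i (D.dot (D.s i) lam + D.ρ) = -D.pair i (lam + D.ρ) := by
  rw [dot_s_eq, sub_add_eq_add_sub, sub_eq_add_neg, ← neg_zsmul, pair_add_zsmul_alpha]
  ring

lemma dot_s_dot_s (lam : Λ) : D.dot (D.s i) (D.dot (D.s i) lam) = lam := by
  rw [dot_s_eq D _ (D.dot _ _), pair_dot_s_add_rho, dot_s_eq, neg_zsmul, sub_neg_eq_add,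
    sub_add_cancel]

lemma relA_mem_Idl {lam : Λ} {k : ℤ} (hk : 0 ≤ k) (h : D.pair i (lam + D.ρ) = k * l) :
    ket (D.dot (D.s i) lam) + ket lam ∈ D.Idl l :=
  Submodule.subset_span (.inl (.inl ⟨i, lam, ⟨k, hk, h⟩, rfl⟩))

lemma relB_mem_Idl {lam : Λ} (h₁ : 0 < D.pair i (lam + D.ρ)) (h₂ : D.pair i (lam + D.ρ) < l) :
    ket (D.dot (D.s i) lam) + tHalf • ket lam ∈ D.Idl l :=
  Submodule.subset_span (.inl (.inr ⟨i, lam, h₁, h₂, rfl⟩))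

lemma relC_mem_Idl {lam : Λ} (h₁ : l < D.pair i (lam + D.ρ))
    (h₂ : ¬ (l : ℤ) ∣ D.pair i (lam + D.ρ)) :
    ket (D.dot (D.s i) lam) + tHalf • ket (D.dot (D.s i) (D.lamOne l i lam)) +
      ket (D.lamOne l i lam) + tHalf • ket lam ∈ D.Idl l :=
  Submodule.subset_span (.inr ⟨i, lam, h₁, h₂, rfl⟩)

lemma inIplus_ket_add_ket_sub_of_pair_eq_mul {lam : Λ} {c : ℤ} (hc : 0 ≤ c)
    (h : D.pair i (lam + D.ρ) = c * l) :
    D.inIplus l (ket lam + ket (lam - (l * c) • D.α i)) := by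
  refine ⟨_, D.relA_mem_Idl l i hc h, 0, inVplus_zero, ?_⟩
  rw [dot_s_eq, h, smul_zero, add_zero, add_comm, mul_comm]

lemma inIplus_two_smul_ket {lam : Λ} {a : ℤ} (ha : 0 < a) (hal : a < l)
    (h : D.pair i (lam + D.ρ) = a - l) :
    D.inIplus l (ket lam + ket lam) := by
  set lam' := D.dot (D.s i) lam
  have hlam' : D.pair i (lam' + D.ρ) = l - a := by rw [pair_dot_s_add_rho, h, neg_sub]
  have hrel := D.relB_mem_Idl l i (lam := lam') (by omega) (by omega)
  refine ⟨_, Submodule.smul_mem _ (2 : K) hrel, -(ket lam' + ket lam'),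
    inVplus_neg (inVplus_add (inVplus_ket _) (inVplus_ket _)), ?_⟩
  rw [dot_s_dot_s]
  module

lemma inIplus_ket_add_ket_sub_of_lt {lam : Λ} {a c : ℤ} (ha : 0 < a) (hal : a < l) (hc : 1 ≤ c)
    (h : D.pair i (lam + D.ρ) = a + l * (c - 1)) :
    D.inIplus l (ket lam + ket (lam - (l * c) • D.α i)) := by
  set lam' := lam + ((l : ℤ) - a) • D.α i
  have hlam' : D.pair i (lam' + D.ρ) = (l - a) + l * c := by
    rw [add_right_comm, pair_add_zsmul_alpha, h]
    ring
  have hlt : (l : ℤ) < D.pair i (lam' + D.ρ) := by rw [hlam']; nlinarith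
  have hmod : D.pair i (lam' + D.ρ) % l = l - a := by
    rw [hlam', Int.add_mul_emod_self_left]
    exact Int.emod_eq_of_lt (by omega) (by omega)
  have hndvd : ¬ (l : ℤ) ∣ D.pair i (lam' + D.ρ) := by
    rw [Int.dvd_iff_emod_eq_zero, hmod]
    omega
  have hlamOne : D.lamOne l i lam' = lam := by rw [lamOne, hmod, add_sub_cancel_right]
  have hdot : D.dot (D.s i) lam' = lam - (l * c) • D.α i := by
    rw [dot_s_eq, hlam']
    module
  refine ⟨_, D.relC_mem_Idl l i hlt hndvd, -(ket (D.dot (D.s i) lam) + ket lam'),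
    inVplus_neg (inVplus_add (inVplus_ket _) (inVplus_ket _)), ?_⟩
  rw [hlamOne, hdot]
  module

lemma inIplus_ket_add_ket_sub {lam : Λ} {a c : ℤ} (ha : 0 < a) (hal : a ≤ l) (hc : 0 ≤ c)
    (h : D.pair i (lam + D.ρ) = a + l * (c - 1)) :
    D.inIplus l (ket lam + ket (lam - (l * c) • D.α i)) := by
  rcases hal.eq_or_lt with rfl | hal
  · exact D.inIplus_ket_add_ket_sub_of_pair_eq_mul l i hc (by rw [h]; ring)
  rcases hc.eq_or_lt with rfl | hc
  · rw [mul_zero, zero_smul, sub_zero]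
    exact D.inIplus_two_smul_ket l i ha hal (by rw [h]; ring)
  · exact D.inIplus_ket_add_ket_sub_of_lt l i ha hal hc h

lemma inIplus_of_restricted_of_nonneg {lam0 nu : Λ} (h0 : D.restricted l lam0)
    (hc : 0 ≤ D.pair i (nu + D.ρ)) :
    D.inIplus l (ket (lam0 + l • nu) + ket (lam0 + l • D.dot (D.s i) nu)) := by
  have hpair : D.pair i (lam0 + l • nu + D.ρ) =
      D.pair i (lam0 + D.ρ) + l * (D.pair i (nu + D.ρ) - 1) := by
    simp only [map_add, map_nsmul, D.pair_rho, nsmul_eq_mul]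
    ring
  have hdot : lam0 + l • D.dot (D.s i) nu =
      lam0 + l • nu - (l * D.pair i (nu + D.ρ)) • D.α i := by
    rw [dot_s_eq, ← natCast_zsmul, ← natCast_zsmul, mul_smul]
    module
  rw [hdot]
  have ha : D.pair i (lam0 + D.ρ) ≤ l := by
    have := h0.2 i
    rw [map_add, D.pair_rho]
    omega
  exact D.inIplus_ket_add_ket_sub l i (h0.1 i) ha hc hpair

end RootData

theorem statement8_general {Λ W : Type} [AddCommGroup Λ] [Group W] [Fintype W]
    (D : RootData Λ W) (l : ℕ) (lam0 : Λ)
    (h0 : D.restricted l lam0) (nu : Λ) (i : Fin D.n) :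
    D.inIplus l (ket (lam0 + l • nu) + ket (lam0 + l • D.dot (D.s i) nu)) := by
  rcases le_total 0 (D.pair i (nu + D.ρ)) with hc | hc
  · exact D.inIplus_of_restricted_of_nonneg l i h0 hc
  · have h := D.inIplus_of_restricted_of_nonneg l i (nu := D.dot (D.s i) nu) h0
      (by rw [D.pair_dot_s_add_rho]; omega)
    rwa [D.dot_s_dot_s, add_comm] at h

/-- equation (1.16) of the paper, the mod `t^{1/2}`
straightening identity: for every `λ₀ ∈ Π_l`, every `ν ∈ a_ℤ^*` and every `i`,
`|λ₀ + lν⟩ + |λ₀ + l(s_i∘ν)⟩ ∈ I + t^{1/2}V⁺`. -/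
theorem statement8 {Λ W : Type} [AddCommGroup Λ] [Group W] [Fintype W]
    (D : RootData Λ W) (l : ℕ) (hl : 0 < l) (lam0 : Λ)
    (h0 : D.restricted l lam0) (nu : Λ) (i : Fin D.n) :
    D.inIplus l (ket (lam0 + l • nu) + ket (lam0 + l • D.dot (D.s i) nu)) :=
  statement8_general D l lam0 h0 nu i
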